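/- Let X be a right A-Galois object. Writing α(x) = x₍₀₎ ⊗ x₍₁₎ and β(a) = a^[1] ⊗ a^[2], the following hold for all x ∈ X and a ∈ A: (i) φ(a·x₍₁₎)·x₍₀₎ = φ_X(a^[2]·x)·a^[1], i.e. (id ⊗ φ)((1 ⊗ a)·α(x)) = (id ⊗ (φ_X(·x)))(β(a)); and (ii) φ(x₍₁₎·S(a))·x₍₀₎ = φ_X(x·a^[1])·a^[2], i.e. (id ⊗ φ)(α(x)·(1 ⊗ S(a))) = ((φ_X(x·)) ⊗ id)(β(a)) after identifying the appropriate leg. -/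

import Mathlib

open TensorProduct

noncomputable section

variable (k : Type*) [Field k]

/-- Apply a linear functional to the second tensor factor. -/
def applySnd {M N : Type*} [AddCommGroup M] [Module k M]
    [AddCommGroup N] [Module k N] (f : N →ₗ[k] k) : M ⊗[k] N →ₗ[k] M :=
  (TensorProduct.rid k M).toLinearMap ∘ₗ LinearMap.lTensor M f

/-- Apply a linear functional to the first tensor factor. -/
def applyFst {M N : Type*} [AddCommGroup M] [Module k M]
    [AddCommGroup N] [Module k N] (f : M →ₗ[k] k) : M ⊗[k] N →ₗ[k] N :=
  (TensorProduct.lid k N).toLinearMap ∘ₗ LinearMap.rTensor N f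

variable (A X : Type*) [Ring A] [HopfAlgebra k A] [Ring X] [Algebra k X]

/-- The Galois map `V : X ⊗ X → X ⊗ A`, `x ⊗ y ↦ (x ⊗ 1) * α y`. -/
def galoisV (α : X →ₐ[k] X ⊗[k] A) : X ⊗[k] X →ₗ[k] X ⊗[k] A :=
  LinearMap.mul' k (X ⊗[k] A) ∘ₗ
    TensorProduct.map ((TensorProduct.mk k X A).flip 1) α.toLinearMap

/-- A Hopf algebra with bijective antipode and faithful left integral `φ`,
together with a right Galois coaction `α` on `X` with trivial coinvariants. -/
structure GaloisContext where
  φ : A →ₗ[k] k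
  φ_ne : φ ≠ 0
  φ_integral : ∀ a : A, applySnd k φ (Coalgebra.comul a) = φ a • (1 : A)
  φ_faithful_left : ∀ a : A, (∀ b : A, φ (a * b) = 0) → a = 0
  φ_faithful_right : ∀ a : A, (∀ b : A, φ (b * a) = 0) → a = 0
  antipode_bijective : Function.Bijective (HopfAlgebra.antipode (R := k) (A := A))
  α : X →ₐ[k] X ⊗[k] A
  coassoc : ∀ x : X,
    TensorProduct.assoc k X A A ((LinearMap.rTensor A α.toLinearMap) (α x))
      = LinearMap.lTensor X (Coalgebra.comul (R := k) (A := A)) (α x)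
  counit_id : ∀ x : X,
    applySnd k (Coalgebra.counit (R := k) (A := A)) (α x) = x
  coinv_trivial : ∀ x : X, α x = x ⊗ₜ[k] (1 : A) → ∃ c : k, x = c • (1 : X)
  galois : Function.Bijective (galoisV k A X α)

variable {k A X}

/-- The Galois map as a linear equivalence. -/
def GaloisContext.V (G : GaloisContext k A X) : (X ⊗[k] X) ≃ₗ[k] (X ⊗[k] A) :=
  LinearEquiv.ofBijective (galoisV k A X G.α) G.galois

/-- The map `β : A → X ⊗ X`, `a ↦ V⁻¹(1 ⊗ a)`. -/
def GaloisContext.β (G : GaloisContext k A X) : A →ₗ[k] X ⊗[k] X :=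
  G.V.symm.toLinearMap ∘ₗ TensorProduct.mk k X A 1

end

/-! Since `V (β a) = 1 ⊗ a`, both formulas are identities of linear maps on `X ⊗ X` evaluated
at `β a`. For (i), `(y ⊗ 1) α(z) α(x) = (y ⊗ 1) α(z x)` is sent by `id ⊗ φ` to `φ_X(z x) y`.
For (ii), first apply `y ⊗ b ↦ α(y) (1 ⊗ S b)`: it sends `1 ⊗ a` to `1 ⊗ S a`, and, by
coassociativity, the antipode axiom and the counit property, it sends `V (y ⊗ z)` to
`α(y) (z ⊗ 1)`, which `id ⊗ φ` turns into `φ_X(x y) z` after left multiplication by `α x`. -/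

section Slices

variable {k : Type*} [Field k]

@[simp]
lemma applySnd_tmul {M N : Type*} [AddCommGroup M] [Module k M] [AddCommGroup N] [Module k N]
    (f : N →ₗ[k] k) (m : M) (n : N) : applySnd k f (m ⊗ₜ[k] n) = f n • m := by
  simp [applySnd]

@[simp]
lemma applyFst_tmul {M N : Type*} [AddCommGroup M] [Module k M] [AddCommGroup N] [Module k N]
    (f : M →ₗ[k] k) (m : M) (n : N) : applyFst k f (m ⊗ₜ[k] n) = f m • n := by
  simp [applyFst]

variable {M N : Type*} [Ring M] [Algebra k M] [Ring N] [Algebra k N]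

lemma applySnd_tmul_one_mul (f : N →ₗ[k] k) (m : M) (s : M ⊗[k] N) :
    applySnd k f ((m ⊗ₜ[k] (1 : N)) * s) = m * applySnd k f s := by
  induction s using TensorProduct.induction_on with
  | zero => simp
  | tmul m' n => simp [Algebra.TensorProduct.tmul_mul_tmul]
  | add s t hs ht => simp [mul_add, hs, ht]

lemma applySnd_mul_tmul_one (f : N →ₗ[k] k) (m : M) (s : M ⊗[k] N) :
    applySnd k f (s * (m ⊗ₜ[k] (1 : N))) = applySnd k f s * m := by
  induction s using TensorProduct.induction_on with
  | zero => simp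
  | tmul m' n => simp [Algebra.TensorProduct.tmul_mul_tmul]
  | add s t hs ht => simp [add_mul, hs, ht]

end Slices

section Coaction

open HopfAlgebra

variable {k : Type*} [Field k] {A X : Type*} [Ring A] [HopfAlgebra k A] [Ring X] [Algebra k X]
  (α : X →ₐ[k] X ⊗[k] A)

@[simp]
lemma galoisV_tmul (y z : X) : galoisV k A X α (y ⊗ₜ[k] z) = (y ⊗ₜ[k] (1 : A)) * α z := by
  simp [galoisV]

lemma GaloisContext.galoisV_β (G : GaloisContext k A X) (a : A) :
    galoisV k A X G.α (G.β a) = (1 : X) ⊗ₜ[k] a :=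
  G.V.apply_symm_apply _

def antipodeTwist : X ⊗[k] A →ₗ[k] X ⊗[k] A :=
  LinearMap.mul' k (X ⊗[k] A) ∘ₗ TensorProduct.map α.toLinearMap
    ((Algebra.TensorProduct.includeRight : A →ₐ[k] X ⊗[k] A).toLinearMap ∘ₗ antipode k)

@[simp]
lemma antipodeTwist_tmul (y : X) (b : A) :
    antipodeTwist α (y ⊗ₜ[k] b) = α y * ((1 : X) ⊗ₜ[k] antipode k b) := by
  simp [antipodeTwist]

lemma antipodeTwist_eq_lTensor_assoc_rTensor :
    antipodeTwist α = LinearMap.lTensor X (LinearMap.mul' k A ∘ₗ (antipode k).lTensor A) ∘ₗ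
      (TensorProduct.assoc k X A A).toLinearMap ∘ₗ LinearMap.rTensor A α.toLinearMap := by
  refine TensorProduct.ext' fun y b => ?_
  simp only [antipodeTwist_tmul, LinearMap.comp_apply, LinearMap.rTensor_tmul,
    AlgHom.toLinearMap_apply]
  induction α y using TensorProduct.induction_on with
  | zero => simp
  | tmul u v => simp [Algebra.TensorProduct.tmul_mul_tmul]
  | add s t hs ht => simp only [add_mul, add_tmul, map_add, hs, ht]

lemma antipodeTwist_coaction
    (hcoassoc : ∀ x : X, TensorProduct.assoc k X A A (LinearMap.rTensor A α.toLinearMap (α x))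
      = LinearMap.lTensor X (Coalgebra.comul (R := k) (A := A)) (α x))
    (hcounit : ∀ x : X, applySnd k (Coalgebra.counit (R := k) (A := A)) (α x) = x) (z : X) :
    antipodeTwist α (α z) = z ⊗ₜ[k] (1 : A) := by
  have hcounit' : LinearMap.lTensor X (Coalgebra.counit (R := k) (A := A)) (α z)
      = z ⊗ₜ[k] (1 : k) := by
    rw [← (TensorProduct.rid k X).injective.eq_iff, ← LinearEquiv.coe_toLinearMap,
      ← LinearMap.comp_apply]
    exact (hcounit z).trans (by simp)
  rw [antipodeTwist_eq_lTensor_assoc_rTensor, LinearMap.comp_apply, LinearMap.comp_apply,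
    LinearEquiv.coe_toLinearMap, hcoassoc, ← LinearMap.lTensor_comp_apply, LinearMap.comp_assoc,
    mul_antipode_lTensor_comul, LinearMap.lTensor_comp, LinearMap.comp_apply, hcounit']
  simp

lemma antipodeTwist_tmul_one_mul (y : X) (s : X ⊗[k] A) :
    antipodeTwist α ((y ⊗ₜ[k] (1 : A)) * s) = α y * antipodeTwist α s := by
  induction s using TensorProduct.induction_on with
  | zero => simp
  | tmul m b => simp [Algebra.TensorProduct.tmul_mul_tmul, mul_assoc]
  | add s t hs ht => simp only [mul_add, map_add, hs, ht]

variable (φ : A →ₗ[k] k) (φX : X →ₗ[k] k) (hφX : ∀ x : X, applySnd k φ (α x) = φX x • (1 : X))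
include hφX

lemma applySnd_galoisV_mul (x : X) (t : X ⊗[k] X) :
    applySnd k φ (galoisV k A X α t * α x) = applySnd k (φX ∘ₗ LinearMap.mulRight k x) t := by
  induction t using TensorProduct.induction_on with
  | zero => simp
  | tmul y z =>
    rw [galoisV_tmul, mul_assoc, ← map_mul, applySnd_tmul_one_mul, hφX]
    simp
  | add s t hs ht => simp only [map_add, add_mul, hs, ht]

lemma applySnd_mul_antipodeTwist_galoisV
    (hcoassoc : ∀ x : X, TensorProduct.assoc k X A A (LinearMap.rTensor A α.toLinearMap (α x))
      = LinearMap.lTensor X (Coalgebra.comul (R := k) (A := A)) (α x))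
    (hcounit : ∀ x : X, applySnd k (Coalgebra.counit (R := k) (A := A)) (α x) = x)
    (x : X) (t : X ⊗[k] X) :
    applySnd k φ (α x * antipodeTwist α (galoisV k A X α t))
      = applyFst k (φX ∘ₗ LinearMap.mulLeft k x) t := by
  induction t using TensorProduct.induction_on with
  | zero => simp
  | tmul y z =>
    rw [galoisV_tmul, antipodeTwist_tmul_one_mul, antipodeTwist_coaction α hcoassoc hcounit,
      ← mul_assoc, ← map_mul, applySnd_mul_tmul_one, hφX]
    simp
  | add s t hs ht => simp only [map_add, mul_add, hs, ht]

end Coaction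

theorem galois_object_beta_integral_formulas_general
    {k : Type*} [Field k] {A X : Type*} [Ring A] [HopfAlgebra k A]
    [Ring X] [Algebra k X]
    (G : GaloisContext k A X)
    (φX : X →ₗ[k] k)
    (hφX : ∀ x : X, applySnd k G.φ (G.α x) = φX x • (1 : X))
    (x : X) (a : A) :
    applySnd k G.φ (((1 : X) ⊗ₜ[k] a) * G.α x)
        = applySnd k (φX ∘ₗ LinearMap.mulRight k x) (G.β a) ∧
    applySnd k G.φ (G.α x * ((1 : X) ⊗ₜ[k] (HopfAlgebra.antipode (R := k) (A := A) a)))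
        = applyFst k (φX ∘ₗ LinearMap.mulLeft k x) (G.β a) := by
  have h₁ := applySnd_galoisV_mul G.α G.φ φX hφX x (G.β a)
  have h₂ := applySnd_mul_antipodeTwist_galoisV G.α G.φ φX hφX G.coassoc G.counit_id x (G.β a)
  rw [G.galoisV_β] at h₁ h₂
  rw [antipodeTwist_tmul, map_one, one_mul] at h₂
  exact ⟨h₁, h₂⟩

theorem galois_object_beta_integral_formulas
    {k : Type*} [Field k] {A X : Type*} [Ring A] [HopfAlgebra k A]
    [Ring X] [Algebra k X] [Nontrivial X]
    (G : GaloisContext k A X)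
    (φX : X →ₗ[k] k)
    (hφX : ∀ x : X, applySnd k G.φ (G.α x) = φX x • (1 : X))
    (x : X) (a : A) :
    applySnd k G.φ (((1 : X) ⊗ₜ[k] a) * G.α x)
        = applySnd k (φX ∘ₗ LinearMap.mulRight k x) (G.β a) ∧
    applySnd k G.φ (G.α x * ((1 : X) ⊗ₜ[k] (HopfAlgebra.antipode (R := k) (A := A) a)))
        = applyFst k (φX ∘ₗ LinearMap.mulLeft k x) (G.β a) :=
  galois_object_beta_integral_formulas_general G φX hφX x a
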